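/- arXiv:0906.1240 — 7 statements merged into one kernel-verified Lean document; each statement's English description precedes it below -/
import Mathlib

section
/- If n ≥ 2 is even and f ∈ ℤ[x] is irreducible with leading coefficient c and content divisor r_f = gcd{f(x) : x ∈ ℤ}, then the set B_f = {a/b : 1 ≤ a < b, b an odd prime, gcd(c·r_f, b) = 1, and a·c·x^(n-1) ≡ −r_f (mod b) has a solution} is dense in the interval (0,1). -/
/-!
By Dirichlet's theorem there are arbitrarily large primes `b ≡ 2 (mod n - 1)`. Since `n - 1` is
odd, `gcd(b - 1, n - 1) = 1`, so `z ↦ z ^ (n - 1)` permutes `(ℤ/b)ˣ` and `a c z^(n-1) ≡ -r` is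
solvable for every `1 ≤ a < b` once `b ∤ c r`. Thus `B_f` contains every `a/b ∈ (0,1)` for
infinitely many denominators `b`, and such fractions are dense.
-/

/-- `r` is the (nonnegative) gcd of the values of `f` on `ℤ`. -/
def IsGcdOfValues (f : Polynomial ℤ) (r : ℤ) : Prop :=
  0 ≤ r ∧ (∀ x : ℤ, r ∣ f.eval x) ∧ ∀ s : ℤ, (∀ x : ℤ, s ∣ f.eval x) → s ∣ r

open Filter

theorem IsGcdOfValues.ne_zero {f : Polynomial ℤ} {r : ℤ} (hr : IsGcdOfValues f r) (hf : f ≠ 0) :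
    r ≠ 0 := by
  rintro rfl
  exact hf (Polynomial.zero_of_eval_zero f fun x => zero_dvd_iff.1 (hr.2.1 x))

theorem Ioo_subset_closure_of_frequently_div {S : Set ℝ}
    (h : ∃ᶠ b : ℕ in atTop, ∀ a : ℕ, 1 ≤ a → a < b → (a : ℝ) / b ∈ S) :
    Set.Ioo (0 : ℝ) 1 ⊆ closure S := by
  rintro x ⟨hx0, hx1⟩
  refine Metric.mem_closure_iff.2 fun ε hε => ?_
  obtain ⟨N, hN⟩ := exists_nat_gt (max (1 / ε) (1 / x))
  obtain ⟨b, hbN, hb⟩ := frequently_atTop.1 h N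
  have hNb : max (1 / ε) (1 / x) < b := hN.trans_le (by exact_mod_cast hbN)
  have hb0 : (0 : ℝ) < b := (lt_max_of_lt_left (one_div_pos.2 hε)).trans hNb
  have hεb : 1 < ε * b := by rw [← div_lt_iff₀' hε]; exact (le_max_left _ _).trans_lt hNb
  have hxb : 1 < x * b := by rw [← div_lt_iff₀' hx0]; exact (le_max_right _ _).trans_lt hNb
  set a := ⌊x * b⌋₊
  have ha1 : 1 ≤ a := Nat.le_floor (by push_cast; linarith)
  have hab : a < b := (Nat.floor_lt (by positivity)).2 (by nlinarith)
  have hax : (a : ℝ) ≤ x * b := Nat.floor_le (by positivity)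
  have hxa : x * b < a + 1 := Nat.lt_floor_add_one _
  refine ⟨a / b, hb a ha1 hab, ?_⟩
  have hdist : |x * b - a| < ε * b := abs_sub_lt_iff.2 ⟨by linarith, by linarith⟩
  rwa [Real.dist_eq, ← mul_div_cancel_right₀ x hb0.ne', ← sub_div, abs_div, abs_of_pos hb0,
    div_lt_iff₀ hb0]

theorem FiniteField.exists_pow_eq_of_coprime {K : Type*} [Field K] [Fintype K] {m : ℕ}
    (hm : (Fintype.card K - 1).Coprime m) {t : K} (ht : t ≠ 0) : ∃ z : K, z ^ m = t := by
  classical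
  have h : (Nat.card Kˣ).Coprime m := by rwa [Nat.card_eq_fintype_card, Fintype.card_units]
  obtain ⟨u, hu⟩ := (powCoprime h).surjective (Units.mk0 t ht)
  exact ⟨u, by simpa using congrArg Units.val hu⟩

theorem Int.exists_dvd_mul_pow_add {p m : ℕ} [Fact p.Prime] (hpm : (p - 1).Coprime m) {A r : ℤ}
    (hA : ¬ (p : ℤ) ∣ A) (hr : ¬ (p : ℤ) ∣ r) : ∃ z : ℤ, (p : ℤ) ∣ A * z ^ m + r := by
  simp_rw [← ZMod.intCast_zmod_eq_zero_iff_dvd] at hA hr ⊢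
  obtain ⟨w, hw⟩ := FiniteField.exists_pow_eq_of_coprime (K := ZMod p) (by rwa [ZMod.card])
    (div_ne_zero (neg_ne_zero.2 hr) hA)
  refine ⟨w.val, ?_⟩
  push_cast
  rw [ZMod.natCast_zmod_val, hw, mul_div_cancel₀ _ hA, neg_add_cancel]

theorem Nat.frequently_atTop_prime_coprime_sub_one {m : ℕ} (hm : Odd m) :
    ∃ᶠ p in atTop, p.Prime ∧ (p - 1).Coprime m := by
  have : NeZero m := ⟨hm.pos.ne'⟩
  have h2 : IsUnit ((2 : ℕ) : ZMod m) :=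
    (ZMod.isUnit_iff_coprime 2 m).2 (Nat.coprime_two_left.2 hm)
  refine frequently_atTop.2 fun N => ?_
  obtain ⟨p, hpN, hp, hp2⟩ := Nat.forall_exists_prime_gt_and_eq_mod h2 N
  refine ⟨p, hpN.le, hp, ?_⟩
  rw [← ZMod.isUnit_iff_coprime, Nat.cast_sub hp.one_le, hp2]
  norm_num

theorem stmt_0_general (f : Polynomial ℤ) (n : ℕ) (c r : ℤ)
    (hf : Irreducible f) (hn : 2 ≤ n) (hneven : Even n)
    (hc : f.leadingCoeff = c) (hr : IsGcdOfValues f r) :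
    Set.Ioo (0 : ℝ) 1 ⊆ closure
      {x : ℝ | ∃ a b : ℕ, b.Prime ∧ Odd b ∧ 1 ≤ a ∧ a < b ∧
        IsCoprime (c * r) (b : ℤ) ∧
        (∃ z : ℤ, (b : ℤ) ∣ (a : ℤ) * c * z ^ (n - 1) + r) ∧
        x = (a : ℝ) / b} := by
  have hcr : c * r ≠ 0 :=
    mul_ne_zero (hc ▸ Polynomial.leadingCoeff_ne_zero.2 hf.ne_zero) (hr.ne_zero hf.ne_zero)
  have hm : Odd (n - 1) := Nat.Even.sub_odd (by omega) hneven odd_one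
  refine Ioo_subset_closure_of_frequently_div
    (((Nat.frequently_atTop_prime_coprime_sub_one hm).and_eventually
      (eventually_gt_atTop ((c * r).natAbs + 2))).mono ?_)
  rintro b ⟨⟨hb, hbm⟩, hbig⟩ a ha1 hab
  have : Fact b.Prime := ⟨hb⟩
  have hb' : Prime (b : ℤ) := Nat.prime_iff_prime_int.1 hb
  have hbcr : ¬ (b : ℤ) ∣ c * r := fun h =>
    hcr (Int.eq_zero_of_dvd_of_natAbs_lt_natAbs h (by simp only [Int.natAbs_natCast]; omega))
  have hba : ¬ (b : ℤ) ∣ a := fun h => by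
    have := Nat.le_of_dvd ha1 (Int.natCast_dvd_natCast.1 h)
    omega
  refine ⟨a, b, hb, hb.odd_of_ne_two (by omega), ha1, hab, (hb'.coprime_iff_not_dvd.2 hbcr).symm,
    Int.exists_dvd_mul_pow_add hbm ?_ fun h => hbcr (h.mul_left c), rfl⟩
  exact hb'.not_dvd_mul hba fun h => hbcr (h.mul_right r)

theorem stmt_0 (f : Polynomial ℤ) (n : ℕ) (c r : ℤ)
    (hf : Irreducible f) (hdeg : f.natDegree = n) (hn : 2 ≤ n) (hneven : Even n)
    (hc : f.leadingCoeff = c) (hr : IsGcdOfValues f r) :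
    Set.Ioo (0 : ℝ) 1 ⊆ closure
      {x : ℝ | ∃ a b : ℕ, b.Prime ∧ Odd b ∧ 1 ≤ a ∧ a < b ∧
        IsCoprime (c * r) (b : ℤ) ∧
        (∃ z : ℤ, (b : ℤ) ∣ (a : ℤ) * c * z ^ (n - 1) + r) ∧
        x = (a : ℝ) / b} :=
  stmt_0_general f n c r hf hn hneven hc hr
end

section
/- Let p be a prime with p ≡ 3 (mod 4), and write an even number n−1 = 2^e · h with h odd and gcd(h, p−1) = 1. Then the image of the map x ↦ x^(n-1) on (ℤ/pℤ)* is exactly the set of nonzero quadratic residues mod p. -/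
/-! In a group of exponent dividing `m`, Bézout shows that `x ↦ x ^ k` and `x ↦ x ^ gcd(k, m)` have
the same image. For `(ZMod p)ˣ` take `m = p - 1 ≡ 2 (mod 4)`: since `h` is prime to `p - 1` and `e ≥ 1`,
`gcd(2 ^ e * h, p - 1) = 2`, so the image is that of squaring. -/

theorem range_pow_eq_range_pow_gcd {G : Type*} [Group G] {m : ℕ} (hm : ∀ g : G, g ^ m = 1)
    (k : ℕ) : Set.range (fun g : G => g ^ k) = Set.range (fun g : G => g ^ Nat.gcd k m) := by
  apply Set.Subset.antisymm
  · rintro _ ⟨g, rfl⟩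
    obtain ⟨c, hc⟩ := Nat.gcd_dvd_left k m
    exact ⟨g ^ c, by dsimp only; rw [← pow_mul, mul_comm, ← hc]⟩
  · rintro _ ⟨g, rfl⟩
    refine ⟨g ^ Nat.gcdA k m, ?_⟩
    calc (g ^ Nat.gcdA k m) ^ k = g ^ ((k * Nat.gcdA k m : ℤ) + m * Nat.gcdB k m) := by
          rw [zpow_add, zpow_mul g (m : ℤ), zpow_natCast g m, hm, one_zpow, mul_one, mul_comm,
            zpow_mul, zpow_natCast]
      _ = g ^ Nat.gcd k m := by rw [← Nat.gcd_eq_gcd_ab, zpow_natCast]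

theorem Nat.gcd_two_pow_mul_eq_two {m e h : ℕ} (hm : m % 4 = 2) (he : 1 ≤ e)
    (hh : Nat.Coprime h m) : Nat.gcd (2 ^ e * h) m = 2 := by
  obtain ⟨o, rfl⟩ : 2 ∣ m := by omega
  have ho : Odd o := by rw [Nat.odd_iff]; omega
  obtain ⟨f, rfl⟩ := Nat.exists_eq_add_of_le' he
  rw [Nat.Coprime.gcd_mul_right_cancel _ hh, pow_succ', Nat.gcd_mul_left,
    (Nat.coprime_two_left.mpr ho).pow_left f, mul_one]

theorem range_sq_eq_isSquare {G : Type*} [Monoid G] :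
    Set.range (fun g : G => g ^ 2) = {g | IsSquare g} := by
  ext g
  simp [IsSquare, sq, eq_comm]

theorem stmt_4_general (p : ℕ) (hp : p.Prime) (hp3 : p % 4 = 3)
    (n e h : ℕ)
    (hfac : n - 1 = 2 ^ e * h) (he : 1 ≤ e)
    (hgcd : Nat.gcd h (p - 1) = 1) :
    Set.range (fun x : (ZMod p)ˣ => x ^ (n - 1))
      = {x : (ZMod p)ˣ | IsSquare x} := by
  have : Fact p.Prime := ⟨hp⟩
  have hgcd2 : Nat.gcd (n - 1) (p - 1) = 2 :=
    hfac ▸ Nat.gcd_two_pow_mul_eq_two (by omega) he hgcd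
  rw [range_pow_eq_range_pow_gcd (ZMod.units_pow_card_sub_one_eq_one p), hgcd2,
    range_sq_eq_isSquare]

theorem stmt_4 (p : ℕ) (hp : p.Prime) (hp3 : p % 4 = 3)
    (n e h : ℕ) (hn : 3 ≤ n) (hnodd : Odd n)
    (hfac : n - 1 = 2 ^ e * h) (he : 1 ≤ e) (hh : Odd h)
    (hgcd : Nat.gcd h (p - 1) = 1) :
    Set.range (fun x : (ZMod p)ˣ => x ^ (n - 1))
      = {x : (ZMod p)ˣ | IsSquare x} :=
  stmt_4_general p hp hp3 n e h hfac he hgcd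
end

section
/- Let f ∈ ℤ[x] be irreducible of degree n with homogenization g(x,y) = Σᵢ cᵢ xⁱ y^(n−i). For any prime b with gcd(b, c·r_f) = 1 (c the leading coefficient, r_f = gcd of values of f) and any integer t with 1 ≤ t < b, the polynomial w ↦ g(bw + t, b) is irreducible in ℤ[w]. -/
/-!
Over `ℚ`, `g(bw + t, b) = bⁿ f(w + t/b)` is a unit times a translate of `f`, hence irreducible
by Gauss's lemma; so it remains to see that `g(bw + t, b)` is primitive. Modulo a prime `p ∤ b`
it is still `bⁿ f(w + t/b)`, which vanishes only if `f` does, and `f` is primitive. Modulo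
`p = b` only the top term survives, the constant `c tⁿ`, which is nonzero since `b ∤ c` and
`0 < t < b`.
-/

open Polynomial

namespace Polynomial

/-- `g(b X + t, b)`, where `g = ∑ fᵢ xⁱ yⁿ⁻ⁱ` is the degree-`n` homogenization of `f`. -/
noncomputable def shiftedHomogenization {R : Type*} [CommRing R] (f : R[X]) (n : ℕ) (b t : R) :
    R[X] :=
  ∑ i ∈ Finset.range (n + 1), C (f.coeff i) * (C b * X + C t) ^ i * C b ^ (n - i)

section CommRing

variable {R S : Type*} [CommRing R] [CommRing S]

theorem map_shiftedHomogenization (φ : R →+* S) (f : R[X]) (n : ℕ) (b t : R) :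
    (shiftedHomogenization f n b t).map φ = shiftedHomogenization (f.map φ) n (φ b) (φ t) := by
  simp [shiftedHomogenization, Polynomial.map_sum, coeff_map]

theorem shiftedHomogenization_zero (f : R[X]) (n : ℕ) (t : R) :
    shiftedHomogenization f n 0 t = C (f.coeff n * t ^ n) := by
  rw [shiftedHomogenization, Finset.sum_eq_single_of_mem n (Finset.self_mem_range_succ n)]
  · simp
  · intro i hi hin
    have : n - i ≠ 0 := by rw [Finset.mem_range] at hi; omega
    simp [this]

theorem _root_.Irreducible.comp_X_add_C {p : R[X]} (hp : Irreducible p) (a : R) :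
    Irreducible (p.comp (X + C a)) := by
  simpa [algEquivAevalXAddC_apply, comp_eq_aeval] using hp.map (algEquivAevalXAddC a)

end CommRing

section Field

variable {K : Type*} [Field K]

theorem shiftedHomogenization_eq_C_mul_comp {f : K[X]} {n : ℕ} (hf : f.natDegree ≤ n)
    {b : K} (hb : b ≠ 0) (t : K) :
    shiftedHomogenization f n b t = C (b ^ n) * f.comp (X + C (t / b)) := by
  have hX : (C b : K[X]) * X + C t = C b * (X + C (t / b)) := by
    rw [mul_add, ← C_mul, mul_div_cancel₀ _ hb]
  conv_rhs => rw [f.as_sum_range' (n + 1) (by omega)]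
  rw [shiftedHomogenization, sum_comp, Finset.mul_sum]
  refine Finset.sum_congr rfl fun i hi => ?_
  have hin : i ≤ n := Nat.lt_succ_iff.mp (Finset.mem_range.mp hi)
  rw [hX, ← C_mul_X_pow_eq_monomial, mul_comp, C_comp, pow_comp, X_comp, mul_pow, ← C_pow,
    ← C_pow, ← Nat.add_sub_cancel' hin, pow_add, Nat.add_sub_cancel_left, C_mul]
  ring

theorem irreducible_shiftedHomogenization {f : K[X]} (hf : Irreducible f) {n : ℕ}
    (hn : f.natDegree ≤ n) {b : K} (hb : b ≠ 0) (t : K) :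
    Irreducible (shiftedHomogenization f n b t) := by
  rw [shiftedHomogenization_eq_C_mul_comp hn hb,
    irreducible_isUnit_mul (isUnit_C.2 (pow_ne_zero n hb).isUnit)]
  exact hf.comp_X_add_C _

end Field

theorem C_natCast_dvd_iff_map_zmod_eq_zero (p : ℕ) (f : ℤ[X]) :
    C (p : ℤ) ∣ f ↔ f.map (Int.castRingHom (ZMod p)) = 0 := by
  rw [C_dvd_iff_dvd_coeff, Polynomial.ext_iff]
  simp only [coeff_map, coeff_zero, eq_intCast, ZMod.intCast_zmod_eq_zero_iff_dvd]

theorem isPrimitive_iff_forall_map_zmod_ne_zero {f : ℤ[X]} :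
    f.IsPrimitive ↔ ∀ p : ℕ, p.Prime → f.map (Int.castRingHom (ZMod p)) ≠ 0 := by
  refine ⟨fun hf p hp hfp => ?_, fun h d hd => ?_⟩
  · exact (Nat.prime_iff_prime_int.mp hp).not_isUnit
      (hf _ ((C_natCast_dvd_iff_map_zmod_eq_zero p f).2 hfp))
  · by_contra hdu
    obtain ⟨p, hp, hpd⟩ := Nat.exists_prime_and_dvd (mt Int.isUnit_iff_natAbs_eq.2 hdu)
    exact h p hp ((C_natCast_dvd_iff_map_zmod_eq_zero p f).1
      ((_root_.map_dvd C (Int.natCast_dvd.2 hpd : (p : ℤ) ∣ d)).trans hd))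

theorem isPrimitive_shiftedHomogenization {f : ℤ[X]} (hf : f.IsPrimitive) {b t : ℤ}
    (hb : Prime b) (hbc : IsCoprime b f.leadingCoeff) (hbt : ¬ b ∣ t) :
    (shiftedHomogenization f f.natDegree b t).IsPrimitive := by
  refine isPrimitive_iff_forall_map_zmod_ne_zero.2 fun p hp hP => ?_
  have hψ (x : ℤ) : Int.castRingHom (ZMod p) x = 0 ↔ (p : ℤ) ∣ x :=
    ZMod.intCast_zmod_eq_zero_iff_dvd x p
  have : Fact p.Prime := ⟨hp⟩
  have hpZ : Prime (p : ℤ) := Nat.prime_iff_prime_int.mp hp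
  rw [map_shiftedHomogenization] at hP
  by_cases hpb : (p : ℤ) ∣ b
  · rw [(hψ b).2 hpb, shiftedHomogenization_zero, C_eq_zero, coeff_map, mul_eq_zero] at hP
    rcases hP with hc | ht
    · exact hpZ.not_isUnit (hbc.isUnit_of_dvd' hpb ((hψ _).1 hc))
    · have hpt : (p : ℤ) ∣ t := (hψ t).1 (eq_zero_of_pow_eq_zero ht)
      exact hbt ((hpZ.associated_of_dvd hb hpb).symm.dvd.trans hpt)
  · rw [shiftedHomogenization_eq_C_mul_comp natDegree_map_le (mt (hψ b).1 hpb), mul_eq_zero,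
      C_eq_zero, comp_X_add_C_eq_zero_iff] at hP
    rcases hP with hbn | hf0
    · exact hpb ((hψ b).1 (eq_zero_of_pow_eq_zero hbn))
    · exact isPrimitive_iff_forall_map_zmod_ne_zero.1 hf p hp hf0

end Polynomial

theorem stmt_7_general (f : Polynomial ℤ) (n : ℕ) (c r : ℤ)
    (hf : Irreducible f) (hdeg : f.natDegree = n) (hn : 1 ≤ n)
    (hc : f.leadingCoeff = c)
    (b t : ℤ) (hb : Prime b) (hcop : IsCoprime b (c * r)) (ht : 1 ≤ t) (htb : t < b) :
    Irreducible
      (∑ i ∈ Finset.range (n + 1),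
        C (f.coeff i) * (C b * X + C t) ^ i * C b ^ (n - i)) := by
  subst hdeg hc
  have hprim : f.IsPrimitive := hf.isPrimitive (by omega)
  have hbt : ¬ b ∣ t := fun h => (Int.le_of_dvd (by omega) h).not_gt htb
  have hP := isPrimitive_shiftedHomogenization hprim hb hcop.of_mul_right_left hbt
  rw [← shiftedHomogenization, IsPrimitive.Int.irreducible_iff_irreducible_map_cast hP,
    map_shiftedHomogenization]
  exact irreducible_shiftedHomogenization
    ((IsPrimitive.Int.irreducible_iff_irreducible_map_cast hprim).1 hf)
    natDegree_map_le (by simpa using hb.ne_zero) _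

theorem stmt_7 (f : Polynomial ℤ) (n : ℕ) (c r : ℤ)
    (hf : Irreducible f) (hdeg : f.natDegree = n) (hn : 1 ≤ n)
    (hc : f.leadingCoeff = c) (hr : IsGcdOfValues f r)
    (b t : ℤ) (hb : Prime b) (hcop : IsCoprime b (c * r)) (ht : 1 ≤ t) (htb : t < b) :
    Irreducible
      (∑ i ∈ Finset.range (n + 1),
        C (f.coeff i) * (C b * X + C t) ^ i * C b ^ (n - i)) :=
  stmt_7_general f n c r hf hdeg hn hc b t hb hcop ht htb
end

section
/- Let f ∈ ℤ[x] with homogenization g, let r = gcd{f(x) : x ∈ ℤ}, let b be a prime with gcd(b, r) = 1, and 1 ≤ t < b. Then r divides g(bw + t, b) for every integer w. -/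
open Polynomial Finset

def homogenizedEval {R : Type*} [CommRing R] (p : R[X]) (n : ℕ) (x y : R) : R :=
  ∑ i ∈ range (n + 1), p.coeff i * x ^ i * y ^ (n - i)

theorem sub_one_dvd_pow_mul_homogenizedEval_sub_eval {R : Type*} [CommRing R] (p : R[X]) {n : ℕ}
    (hn : p.natDegree ≤ n) (a x y : R) :
    a * y - 1 ∣ a ^ n * homogenizedEval p n x y - p.eval (x * a) := by
  rw [homogenizedEval, eval_eq_sum_range' (Nat.lt_succ_of_le hn), mul_sum, ← sum_sub_distrib]
  refine dvd_sum fun i hi => ?_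
  obtain ⟨k, rfl⟩ := Nat.exists_eq_add_of_le (Nat.lt_succ_iff.mp (mem_range.mp hi))
  have key : a ^ (i + k) * (p.coeff i * x ^ i * y ^ (i + k - i)) - p.coeff i * (x * a) ^ i
      = p.coeff i * (x * a) ^ i * ((a * y) ^ k - 1 ^ k) := by
    rw [Nat.add_sub_cancel_left]
    ring
  rw [key]
  exact (sub_dvd_pow_sub_pow _ _ k).mul_left _

theorem dvd_homogenizedEval_of_isCoprime {p : ℤ[X]} {n : ℕ} (hn : p.natDegree ≤ n) {r : ℤ}
    (hr : ∀ x, r ∣ p.eval x) {y : ℤ} (hy : IsCoprime y r) (x : ℤ) :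
    r ∣ homogenizedEval p n x y := by
  obtain ⟨a, c, hac⟩ := hy
  have ha : IsCoprime a r := ⟨y, c, by linear_combination hac⟩
  have hay : r ∣ a * y - 1 := ⟨-c, by linear_combination hac⟩
  have hmul : r ∣ a ^ n * homogenizedEval p n x y := by
    simpa using dvd_add (hay.trans (sub_one_dvd_pow_mul_homogenizedEval_sub_eval p hn a x y))
      (hr (x * a))
  exact ha.pow_left.symm.dvd_of_dvd_mul_left hmul

theorem stmt_8_general (f : Polynomial ℤ) (n : ℕ) (r : ℤ)
    (hdeg : f.natDegree = n) (hr : IsGcdOfValues f r)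
    (b t : ℤ) (hcop : IsCoprime b r) :
    ∀ w : ℤ, r ∣ ∑ i ∈ Finset.range (n + 1),
      f.coeff i * (b * w + t) ^ i * b ^ (n - i) := fun w =>
  dvd_homogenizedEval_of_isCoprime hdeg.le hr.2.1 hcop (b * w + t)

theorem stmt_8 (f : Polynomial ℤ) (n : ℕ) (r : ℤ)
    (hdeg : f.natDegree = n) (hr : IsGcdOfValues f r)
    (b t : ℤ) (hb : Prime b) (hcop : IsCoprime b r) (ht : 1 ≤ t) (htb : t < b) :
    ∀ w : ℤ, r ∣ ∑ i ∈ Finset.range (n + 1),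
      f.coeff i * (b * w + t) ^ i * b ^ (n - i) :=
  stmt_8_general f n r hdeg hr b t hcop
end

section
/- Let f ∈ ℤ[x] with homogenization g, r = gcd{f(x) : x ∈ ℤ}, b a prime with gcd(b, c·r) = 1 (c the leading coefficient), and 1 ≤ t < b. Then gcd{g(bw + t, b) : w ∈ ℤ} = r. -/
/-!
The values `g(z, b)` are the values of `f.scaleRoots b` at `z`, and `g(b x, b) = bⁿ f(x)`.
Polynomial values at arguments congruent modulo `m` are congruent modulo `m`, and `b` is
invertible modulo `r`, so every `g(z, b)` is congruent modulo `r` to some `bⁿ f(x)`. Conversely, a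
common divisor `s` of the `g(b w + t, b)` is prime to `b`, because `g(t, b) ≡ c tⁿ ≢ 0 (mod b)`;
so `b w + t` can be made congruent to any `b x` modulo `s`, and `s ∣ bⁿ f(x)` forces `s ∣ f(x)`.
-/

/-- `r` is the (nonnegative) gcd of the given family of integers. -/
def IsGcdOfFamily (v : ℤ → ℤ) (r : ℤ) : Prop :=
  0 ≤ r ∧ (∀ x : ℤ, r ∣ v x) ∧ ∀ s : ℤ, (∀ x : ℤ, s ∣ v x) → s ∣ r

open Polynomial

namespace Polynomial

variable {R : Type*} [CommRing R] {p : R[X]} {s m : R}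

theorem eval_scaleRoots_eq_sum (p : R[X]) (s z : R) :
    (p.scaleRoots s).eval z =
      ∑ i ∈ Finset.range (p.natDegree + 1), p.coeff i * z ^ i * s ^ (p.natDegree - i) := by
  rw [eval_eq_sum_range, natDegree_scaleRoots]
  refine Finset.sum_congr rfl fun i _ => ?_
  rw [coeff_scaleRoots]
  ring

theorem dvd_eval_scaleRoots_sub_leadingCoeff_mul_pow (p : R[X]) (s z : R) :
    s ∣ (p.scaleRoots s).eval z - p.leadingCoeff * z ^ p.natDegree := by
  rw [eval_scaleRoots_eq_sum, Finset.sum_range_succ, Nat.sub_self, pow_zero, mul_one,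
    coeff_natDegree, add_sub_cancel_right]
  refine Finset.dvd_sum fun i hi => Dvd.dvd.mul_left (dvd_pow_self s ?_) _
  exact Nat.sub_ne_zero_of_lt (Finset.mem_range.mp hi)

theorem not_dvd_eval_scaleRoots (hs : Prime s) (hc : ¬ s ∣ p.leadingCoeff) {t : R}
    (ht : ¬ s ∣ t) : ¬ s ∣ (p.scaleRoots s).eval t := by
  intro h
  have hct := (dvd_sub_right h).mp (dvd_eval_scaleRoots_sub_leadingCoeff_mul_pow p s t)
  rcases hs.dvd_or_dvd hct with hsc | hst
  · exact hc hsc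
  · exact ht (hs.dvd_of_dvd_pow hst)

theorem dvd_eval_scaleRoots_of_forall_dvd_eval (hsm : IsCoprime s m) (h : ∀ x, m ∣ p.eval x)
    (z : R) : m ∣ (p.scaleRoots s).eval z := by
  obtain ⟨u, v, huv⟩ := hsm
  have hcong : m ∣ (p.scaleRoots s).eval (s * (u * z)) - (p.scaleRoots s).eval z :=
    (Dvd.intro (-(v * z)) (by linear_combination -z * huv)).trans (sub_dvd_eval_sub _ _ _)
  rw [scaleRoots_eval_mul] at hcong
  exact (dvd_sub_right ((h (u * z)).mul_left _)).mp hcong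

theorem dvd_eval_of_forall_dvd_eval_scaleRoots (hsm : IsCoprime s m) (t : R)
    (h : ∀ w, m ∣ (p.scaleRoots s).eval (s * w + t)) (x : R) : m ∣ p.eval x := by
  obtain ⟨u, v, huv⟩ := id hsm
  have hcong : m ∣ (p.scaleRoots s).eval (s * (x - u * t) + t) - (p.scaleRoots s).eval (s * x) :=
    (Dvd.intro (t * v) (by linear_combination t * huv)).trans (sub_dvd_eval_sub _ _ _)
  rw [scaleRoots_eval_mul, dvd_sub_right (h _)] at hcong
  exact hsm.pow_left.symm.dvd_of_dvd_mul_left hcong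

end Polynomial

theorem stmt_9 (f : Polynomial ℤ) (n : ℕ) (c r : ℤ)
    (hdeg : f.natDegree = n) (hc : f.leadingCoeff = c)
    (hr : IsGcdOfFamily (fun x => f.eval x) r)
    (b t : ℤ) (hb : Prime b) (hcop : IsCoprime b (c * r)) (ht : 1 ≤ t) (htb : t < b) :
    IsGcdOfFamily
      (fun w => ∑ i ∈ Finset.range (n + 1),
        f.coeff i * (b * w + t) ^ i * b ^ (n - i)) r := by
  subst hdeg hc
  simp_rw [← eval_scaleRoots_eq_sum]
  obtain ⟨hr0, hr_dvd, hr_gcd⟩ := hr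
  refine ⟨hr0, fun w => dvd_eval_scaleRoots_of_forall_dvd_eval hcop.of_mul_right_right hr_dvd _,
    fun s hs => hr_gcd s ?_⟩
  have hbt : ¬ b ∣ t := fun h => (Int.le_of_dvd (by omega) h).not_gt htb
  have hbc : ¬ b ∣ f.leadingCoeff := fun h =>
    hb.not_isUnit (hcop.of_mul_right_left.isUnit_of_dvd' dvd_rfl h)
  have hbs : IsCoprime b s := hb.coprime_iff_not_dvd.mpr fun h =>
    not_dvd_eval_scaleRoots hb hbc hbt (h.trans (by simpa using hs 0))
  exact dvd_eval_of_forall_dvd_eval_scaleRoots hbs t hs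
end

section
/- Let f ∈ ℤ[x] of degree n with homogenization g, r = gcd{f(x) : x ∈ ℤ}, b a prime, t and w integers, and suppose p is a prime with gcd(b, p) = 1 and r·p = g(bw + t, b). If a is an integer such that z = (a·p + b·w + t)/b is an integer, then f(z) ≡ 0 (mod p). -/
/-!
Multiplying by `b ^ n` homogenizes: `b ^ n * f z = g (b * z, b)`. Since
`b * z ≡ b * w + t (mod p)`, this is congruent to `g (b * w + t, b) = r * p ≡ 0`,
and `b` is invertible modulo `p`.
-/

open Finset

namespace MvPolynomial

variable {R σ : Type*} [CommRing R]

theorem dvd_eval_sub_eval {d : R} {x y : σ → R} (h : ∀ i, d ∣ x i - y i)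
    (q : MvPolynomial σ R) : d ∣ eval x q - eval y q := by
  induction q using MvPolynomial.induction_on with
  | C c => simp
  | add q q' hq hq' => simpa only [eval_add, add_sub_add_comm] using dvd_add hq hq'
  | mul_X q i hq =>
    have hsplit : eval x (q * X i) - eval y (q * X i)
        = (eval x q - eval y q) * x i + eval y q * (x i - y i) := by
      simp only [eval_mul, eval_X]; ring
    rw [hsplit]
    exact dvd_add (dvd_mul_of_dvd_left hq _) (dvd_mul_of_dvd_right (h i) _)

end MvPolynomial

namespace Polynomial

variable {R : Type*} [CommSemiring R]

theorem eval_homogenize_eq_sum (p : R[X]) (n : ℕ) (x : Fin 2 → R) :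
    MvPolynomial.eval x (p.homogenize n) =
      ∑ i ∈ range (n + 1), p.coeff i * x 0 ^ i * x 1 ^ (n - i) := by
  simp only [homogenize, MvPolynomial.eval_sum, Nat.sum_antidiagonal_eq_sum_range_succ_mk]
  refine sum_congr rfl fun i _ ↦ ?_
  rw [MvPolynomial.eval_monomial, Finsupp.update_eq_add_single, Finsupp.prod_add_index',
    Finsupp.prod_single_index, Finsupp.prod_single_index]
  · ring
  all_goals simp_all [pow_add]

theorem eval_homogenize_mul_left {p : R[X]} {n : ℕ} (hn : p.natDegree ≤ n) (y z : R) :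
    MvPolynomial.eval ![y * z, y] (p.homogenize n) = y ^ n * p.eval z := by
  rw [eval_homogenize_eq_sum, eval_eq_sum_range' (Nat.lt_succ_of_le hn), mul_sum]
  refine sum_congr rfl fun i hi ↦ ?_
  simp only [Matrix.cons_val_zero, Matrix.cons_val_one]
  rw [← pow_mul_pow_sub y (Nat.lt_succ_iff.mp (mem_range.mp hi)), mul_pow]
  ring

end Polynomial

theorem stmt_10_general (f : Polynomial ℤ) (n : ℕ) (r : ℤ)
    (hdeg : f.natDegree = n)
    (b p : ℤ) (hbp : IsCoprime b p)
    (t w a z : ℤ)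
    (hval : r * p = ∑ i ∈ Finset.range (n + 1),
      f.coeff i * (b * w + t) ^ i * b ^ (n - i))
    (hz : b * z = a * p + b * w + t) :
    p ∣ f.eval z := by
  have hg : MvPolynomial.eval ![b * w + t, b] (f.homogenize n) = r * p := by
    simp [Polynomial.eval_homogenize_eq_sum, hval]
  have hcong : p ∣ MvPolynomial.eval ![b * z, b] (f.homogenize n)
      - MvPolynomial.eval ![b * w + t, b] (f.homogenize n) := by
    refine MvPolynomial.dvd_eval_sub_eval (fun i ↦ ?_) _
    fin_cases i <;> simp [hz]
  rw [Polynomial.eval_homogenize_mul_left hdeg.le, hg] at hcong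
  have hpb : p ∣ b ^ n * f.eval z := by
    simpa only [sub_add_cancel] using hcong.add (dvd_mul_left p r)
  exact hbp.pow_left.symm.dvd_of_dvd_mul_left hpb

theorem stmt_10 (f : Polynomial ℤ) (n : ℕ) (r : ℤ)
    (hdeg : f.natDegree = n) (hr : IsGcdOfValues f r)
    (b p : ℤ) (hb : Prime b) (hp : Prime p) (hbp : IsCoprime b p)
    (t w a z : ℤ)
    (hval : r * p = ∑ i ∈ Finset.range (n + 1),
      f.coeff i * (b * w + t) ^ i * b ^ (n - i))
    (hz : b * z = a * p + b * w + t) :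
    p ∣ f.eval z :=
  stmt_10_general f n r hdeg b p hbp t w a z hval hz
end

section
/- Let b be a prime with b ≡ 3 (mod 4). Then the maximum number of consecutive integers in {1, ..., b−1} that are all quadratic residues mod b, or all quadratic nonresidues mod b, is less than √b. -/
/-! Suppose a run `a, …, a + k - 1` with `k² ≥ b` has constant quadratic character `e ≠ 0`.
The progression `k (a + j)`, `j < k`, has step `k` and spans at least `b`, so modulo `b` it meets
every interval of length `k`: both the run itself and its negative `b - a - k + 1, …, b - a`.
The first gives `χ k = 1`, the second `χ k = χ (-1)`, whereas `χ (-1) = -1` as `b ≡ 3 (mod 4)`. -/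

theorem Nat.exists_le_add_mul_lt_add {s m k t : ℕ} (hmk : m ≤ k) (hs : s < t + k) :
    ∀ N, t ≤ s + m * N → ∃ j ≤ N, t ≤ s + m * j ∧ s + m * j < t + k
  | 0, ht => ⟨0, le_rfl, ht, by simpa using hs⟩
  | N + 1, ht => by
    by_cases htN : t ≤ s + m * N
    · obtain ⟨j, hjN, hj⟩ := Nat.exists_le_add_mul_lt_add hmk hs N htN
      exact ⟨j, by omega, hj⟩
    · refine ⟨N + 1, le_rfl, ht, ?_⟩
      rw [Nat.mul_succ]
      omega

theorem Nat.exists_mul_add_mod_mem_Ico {p m k c : ℕ} (a : ℕ) (hp : 0 < p) (hmk : m ≤ k)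
    (hpk : p ≤ m * k) (hc : c + k ≤ p) :
    ∃ j < k, c ≤ m * (a + j) % p ∧ m * (a + j) % p < c + k := by
  obtain ⟨N, rfl⟩ : ∃ N, k = N + 1 := Nat.exists_eq_add_one.2 (by nlinarith)
  -- the first target interval `[c + n p, c + n p + k)` that does not end before `m a`
  have hn := Nat.div_add_mod (m * a + p - c - (N + 1)) p
  have hn' := Nat.mod_lt (m * a + p - c - (N + 1)) hp
  set n := (m * a + p - c - (N + 1)) / p
  obtain ⟨j, hjN, hlo, hhi⟩ := Nat.exists_le_add_mul_lt_add (s := m * a) (t := c + p * n) hmk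
    (by omega) N (by rw [Nat.mul_succ] at hpk; omega)
  refine ⟨j, by omega, ?_⟩
  have hmod : m * (a + j) = c + (m * a + m * j - (c + p * n)) + p * n := by
    rw [Nat.mul_add]; omega
  rw [hmod, Nat.add_mul_mod_self_left, Nat.mod_eq_of_lt (by omega)]
  omega

theorem ZMod.exists_natCast_mul_eq_natCast_add {p m k c : ℕ} (a : ℕ) (hp : 0 < p)
    (hmk : m ≤ k) (hpk : p ≤ m * k) (hc : c + k ≤ p) :
    ∃ j < k, ∃ i < k, (m : ZMod p) * ((a + j : ℕ) : ZMod p) = ((c + i : ℕ) : ZMod p) := by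
  obtain ⟨j, hj, hlo, hhi⟩ := Nat.exists_mul_add_mod_mem_Ico a hp hmk hpk hc
  refine ⟨j, hj, m * (a + j) % p - c, by omega, ?_⟩
  rw [Nat.add_sub_cancel' hlo, ZMod.natCast_mod]
  push_cast
  rfl

theorem MulChar.map_neg_one_eq_one_of_map_mul_eq {R R' : Type*} [CommRing R] [CommRing R']
    [IsDomain R'] (χ : MulChar R R') {e : R'} (he : e ≠ 0) {m x y : R} (hx : χ x = e)
    (hmx : χ (m * x) = e) (hy : χ y = e) (hmy : χ (-(m * y)) = e) : χ (-1) = 1 := by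
  have hm : χ m = 1 := by
    refine mul_right_cancel₀ he ?_
    rw [one_mul, ← hx, ← map_mul, hmx, hx]
  refine mul_right_cancel₀ he ?_
  calc χ (-1) * e = χ (-1) * (χ m * χ y) := by rw [hm, hy, one_mul]
    _ = χ (-(m * y)) := by rw [← map_mul, ← map_mul, neg_one_mul]
    _ = 1 * e := by rw [hmy, one_mul]

theorem ZMod.neg_natCast_eq_natCast {p x y : ℕ} (h : x + y = p) : -(x : ZMod p) = y :=
  neg_eq_of_add_eq_zero_right (by rw [← Nat.cast_add, h, ZMod.natCast_self])

theorem exists_quadraticChar_eq_of_forall_isSquare_or_forall_not_isSquare {F ι : Type*}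
    [Field F] [Fintype F] [DecidableEq F] {P : ι → Prop} {f : ι → F}
    (hf : ∀ i, P i → f i ≠ 0)
    (h : (∀ i, P i → IsSquare (f i)) ∨ ∀ i, P i → ¬IsSquare (f i)) :
    ∃ e : ℤ, e ≠ 0 ∧ ∀ i, P i → quadraticChar F (f i) = e := by
  rcases h with h | h
  · exact ⟨1, one_ne_zero, fun i hi => (quadraticChar_one_iff_isSquare (hf i hi)).2 (h i hi)⟩
  · exact ⟨-1, by norm_num, fun i hi => quadraticChar_neg_one_iff_not_isSquare.2 (h i hi)⟩

theorem stmt_12 (b : ℕ) (hb : b.Prime) (hb3 : b % 4 = 3)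
    (a k : ℕ) (ha : 1 ≤ a) (hrange : a + k - 1 ≤ b - 1)
    (hrun : (∀ j < k, IsSquare ((a + j : ℕ) : ZMod b)) ∨
            (∀ j < k, ¬ IsSquare ((a + j : ℕ) : ZMod b))) :
    (k : ℝ) < Real.sqrt b := by
  have : Fact b.Prime := ⟨hb⟩
  rw [Real.lt_sqrt k.cast_nonneg]
  suffices k * k < b by exact_mod_cast (sq k).symm ▸ this
  by_contra! hkb
  have hk : k ≠ 0 := fun h => hb.ne_zero (by simpa [h] using hkb)
  have hak : a + k ≤ b := by omega
  have hne : ∀ j < k, ((a + j : ℕ) : ZMod b) ≠ 0 := fun j hj h => by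
    rw [ZMod.natCast_eq_zero_iff] at h
    exact absurd (Nat.le_of_dvd (by omega) h) (by omega)
  obtain ⟨e, he, hχ⟩ :=
    exists_quadraticChar_eq_of_forall_isSquare_or_forall_not_isSquare hne hrun
  obtain ⟨j₁, hj₁, i₁, hi₁, h₁⟩ :=
    ZMod.exists_natCast_mul_eq_natCast_add a hb.pos le_rfl hkb (c := a) hak
  obtain ⟨j₂, hj₂, i₂, hi₂, h₂⟩ :=
    ZMod.exists_natCast_mul_eq_natCast_add a hb.pos le_rfl hkb (c := b + 1 - (a + k)) (by omega)
  have hχ₂ : quadraticChar (ZMod b) (-((k : ZMod b) * ((a + j₂ : ℕ) : ZMod b))) = e := by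
    rw [h₂, ZMod.neg_natCast_eq_natCast (y := a + (k - 1 - i₂)) (by omega)]
    exact hχ _ (by omega)
  have hχneg : quadraticChar (ZMod b) (-1) = -1 :=
    quadraticChar_neg_one_iff_not_isSquare.2 <| by rw [ZMod.exists_sq_eq_neg_one_iff]; omega
  have := (quadraticChar (ZMod b)).map_neg_one_eq_one_of_map_mul_eq he (hχ j₁ hj₁)
    (h₁ ▸ hχ i₁ hi₁) (hχ j₂ hj₂) hχ₂
  exact absurd (this.symm.trans hχneg) (by decide)
end
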